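/- arXiv:2410.13601 — 2 statements merged into one kernel-verified Lean document; each statement's English description precedes it below -/
import Mathlib

section
/- Let n ≥ 1, let f : ℝⁿ → ℝ be a smooth positive function, and suppose u : ℝⁿ → ℝ is a C² function satisfying Δu + ∇ log f · ∇u = log f − |∇ log f|² + α on ℝⁿ for some α ∈ ℝ. Then for every x ∈ ℝⁿ at which the Hessian ∇²u(x) is positive semidefinite, one has 0 ≤ e^{-|∇u(x)|²/4} · det ∇²u(x) ≤ f(x) · e^{α − n}. -/
open MeasureTheory Real
open scoped RealInnerProductSpace

/-- The Euclidean divergence of a vector field `V : ℝⁿ → ℝⁿ`. -/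
noncomputable def diverg {n : ℕ} (V : EuclideanSpace ℝ (Fin n) → EuclideanSpace ℝ (Fin n))
    (x : EuclideanSpace ℝ (Fin n)) : ℝ :=
  LinearMap.trace ℝ _ (fderiv ℝ V x).toLinearMap

/-- The Euclidean Laplacian `Δu = div(∇u)`. -/
noncomputable def laplacian {n : ℕ} (u : EuclideanSpace ℝ (Fin n) → ℝ)
    (x : EuclideanSpace ℝ (Fin n)) : ℝ :=
  diverg (fun y => gradient u y) x

/-- **Jacobian determinant bound (Lemma 2.6).** If `u` is `C²` and satisfies
`Δu + ∇ log f · ∇u = log f − |∇ log f|² + α` on `ℝⁿ`, then at every point where the Hessian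
`∇²u(x)` is positive semidefinite, `0 ≤ e^{-|∇u(x)|²/4} det ∇²u(x) ≤ f(x) e^{α − n}`. -/
theorem jacobian_determinant_bound (n : ℕ) (hn : 1 ≤ n)
    (f : EuclideanSpace ℝ (Fin n) → ℝ)
    (hf_smooth : ContDiff ℝ (⊤ : ℕ∞) f)
    (hf_pos : ∀ x, 0 < f x)
    (u : EuclideanSpace ℝ (Fin n) → ℝ)
    (hu : ContDiff ℝ 2 u)
    (α : ℝ)
    (heq : ∀ x, laplacian u x
        + ⟪gradient (fun y => Real.log (f y)) x, gradient u x⟫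
        = Real.log (f x) - ‖gradient (fun y => Real.log (f y)) x‖ ^ 2 + α) :
    ∀ x : EuclideanSpace ℝ (Fin n),
      (∀ v : EuclideanSpace ℝ (Fin n), 0 ≤ ⟪(fderiv ℝ (gradient u) x) v, v⟫) →
      0 ≤ Real.exp (-‖gradient u x‖ ^ 2 / 4)
            * LinearMap.det (fderiv ℝ (gradient u) x).toLinearMap ∧
      Real.exp (-‖gradient u x‖ ^ 2 / 4)
            * LinearMap.det (fderiv ℝ (gradient u) x).toLinearMap
        ≤ f x * Real.exp (α - n) := by
  intro x hpsd
  have hdiff : DifferentiableAt ℝ (fderiv ℝ u) x := by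
    have : ContDiff ℝ 1 (fderiv ℝ u) := hu.fderiv_right (le_refl 2)
    exact this.differentiable one_ne_zero x
  -- `toDual.symm` as a plain real continuous linear equiv
  set L : (StrongDual ℝ (EuclideanSpace ℝ (Fin n)))
        ≃L[ℝ] EuclideanSpace ℝ (Fin n) :=
    { (InnerProductSpace.toDual ℝ (EuclideanSpace ℝ (Fin n))).symm.toLinearEquiv with
      continuous_toFun :=
        (InnerProductSpace.toDual ℝ (EuclideanSpace ℝ (Fin n))).symm.continuous
      continuous_invFun :=
        (InnerProductSpace.toDual ℝ (EuclideanSpace ℝ (Fin n))).continuous } with hL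
  have hfd : fderiv ℝ (gradient u) x =
      (L : StrongDual ℝ (EuclideanSpace ℝ (Fin n))
          →L[ℝ] EuclideanSpace ℝ (Fin n)).comp (fderiv ℝ (fderiv ℝ u) x) := by
    have h1 : gradient u = ⇑L ∘ fderiv ℝ u := rfl
    rw [h1, ContinuousLinearEquiv.comp_fderiv]
  have hkey : ∀ v w : EuclideanSpace ℝ (Fin n), ⟪(fderiv ℝ (gradient u) x) v, w⟫
      = (fderiv ℝ (fderiv ℝ u) x) v w := by
    intro v w
    rw [hfd]
    exact InnerProductSpace.toDual_symm_apply
  have hsymm2 : IsSymmSndFDerivAt ℝ u x :=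
    (hu.contDiffAt).isSymmSndFDerivAt (by norm_num)
  set T : EuclideanSpace ℝ (Fin n) →ₗ[ℝ] EuclideanSpace ℝ (Fin n) :=
    (fderiv ℝ (gradient u) x).toLinearMap with hT_def
  have hTsymm : T.IsSymmetric := by
    intro v w
    show ⟪(fderiv ℝ (gradient u) x) v, w⟫ = ⟪v, (fderiv ℝ (gradient u) x) w⟫
    rw [show (⟪v, (fderiv ℝ (gradient u) x) w⟫ : ℝ)
        = ⟪(fderiv ℝ (gradient u) x) w, v⟫ from real_inner_comm _ _,
      hkey, hkey]
    exact hsymm2.eq v w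
  have hrank : Module.finrank ℝ (EuclideanSpace ℝ (Fin n)) = n :=
    finrank_euclideanSpace_fin
  set μ : Fin n → ℝ := hTsymm.eigenvalues hrank with hμ
  set B : OrthonormalBasis (Fin n) ℝ (EuclideanSpace ℝ (Fin n)) :=
    hTsymm.eigenvectorBasis hrank with hB
  have happly : ∀ i, T (B i) = μ i • B i := fun i =>
    hTsymm.apply_eigenvectorBasis hrank i
  have hμnonneg : ∀ i, 0 ≤ μ i := by
    intro i
    have h1 : ⟪T (B i), B i⟫ = μ i := by
      rw [happly i, real_inner_smul_left, real_inner_self_eq_norm_sq, B.orthonormal.1 i]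
      simp
    rw [← h1]
    exact hpsd (B i)
  have hmat : LinearMap.toMatrix B.toBasis B.toBasis T = Matrix.diagonal μ := by
    ext i j
    rw [LinearMap.toMatrix_apply]
    simp only [OrthonormalBasis.coe_toBasis]
    rw [happly j, LinearEquiv.map_smul]
    rw [show (B j : EuclideanSpace ℝ (Fin n)) = B.toBasis j from
      (OrthonormalBasis.coe_toBasis B).symm ▸ rfl]
    rw [Module.Basis.repr_self]
    rcases eq_or_ne i j with h | h
    · subst h; simp [Matrix.diagonal]
    · simp [Matrix.diagonal_apply_ne _ h, Finsupp.single_apply, Ne.symm h]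
  have hdet : LinearMap.det T = ∏ i, μ i := by
    rw [← LinearMap.det_toMatrix B.toBasis, hmat, Matrix.det_diagonal]
  have htrace : LinearMap.trace ℝ _ T = ∑ i, μ i := by
    rw [LinearMap.trace_eq_matrix_trace ℝ B.toBasis, hmat, Matrix.trace_diagonal]
  have hdet_nonneg : 0 ≤ LinearMap.det T := by
    rw [hdet]; exact Finset.prod_nonneg fun i _ => hμnonneg i
  have hdet_le : LinearMap.det T ≤ Real.exp (LinearMap.trace ℝ _ T - n) := by
    rw [hdet, htrace]
    calc ∏ i, μ i ≤ ∏ i, Real.exp (μ i - 1) := by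
          apply Finset.prod_le_prod (fun i _ => hμnonneg i)
          intro i _
          have := Real.add_one_le_exp (μ i - 1)
          linarith
      _ = Real.exp (∑ i, (μ i - 1)) := by rw [← Real.exp_sum]
      _ = Real.exp (∑ i, μ i - n) := by
          congr 1
          rw [Finset.sum_sub_distrib]
          simp
  have htr_lap : LinearMap.trace ℝ _ T = laplacian u x := rfl
  set gu := gradient u x with hgu
  set gf := gradient (fun y => Real.log (f y)) x with hgf
  have heqx := heq x
  have hsq : 0 ≤ ‖gf‖ ^ 2 + ⟪gf, gu⟫ + ‖gu‖ ^ 2 / 4 := by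
    have h := norm_add_sq_real gf ((1/2 : ℝ) • gu)
    have h2 : ⟪gf, (1/2 : ℝ) • gu⟫ = (1/2) * ⟪gf, gu⟫ := real_inner_smul_right _ _ _
    have h3 : ‖(1/2 : ℝ) • gu‖ ^ 2 = 1/4 * ‖gu‖ ^ 2 := by
      rw [norm_smul]; simp; ring
    have h4 : 0 ≤ ‖gf + (1/2 : ℝ) • gu‖ ^ 2 := sq_nonneg _
    rw [h, h2, h3] at h4
    linarith
  have hexp_nonneg : 0 ≤ Real.exp (-‖gu‖ ^ 2 / 4) := (Real.exp_pos _).le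
  refine ⟨mul_nonneg hexp_nonneg hdet_nonneg, ?_⟩
  calc Real.exp (-‖gu‖ ^ 2 / 4) * LinearMap.det T
      ≤ Real.exp (-‖gu‖ ^ 2 / 4) * Real.exp (LinearMap.trace ℝ _ T - n) :=
        mul_le_mul_of_nonneg_left hdet_le hexp_nonneg
    _ = Real.exp (-‖gu‖ ^ 2 / 4 + (laplacian u x - n)) := by
        rw [← Real.exp_add, htr_lap]
    _ ≤ Real.exp (Real.log (f x) + (α - n)) := by
        apply Real.exp_le_exp.2
        have hlap : laplacian u x = Real.log (f x) - ‖gf‖ ^ 2 + α - ⟪gf, gu⟫ := by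
          linarith
        rw [hlap]
        linarith
    _ = f x * Real.exp (α - n) := by
        rw [Real.exp_add, Real.exp_log (hf_pos x)]
end

section
/- Let n ≥ 1, let f : ℝⁿ → ℝ be a smooth positive function with ∫_{ℝⁿ} f dx = 1, and suppose u : ℝⁿ → ℝ is a C² function satisfying div(f ∇u) = f log f − |∇f|²/f + α f on ℝⁿ for some α ∈ ℝ, with u(x)/|x| → ∞ as |x| → ∞. Then α ≥ n + (n/2)·log(4π). -/
open MeasureTheory Real Filter

section Aux

open InnerProductSpace Set
open scoped ENNReal Matrix

variable {n : ℕ} {u : EuclideanSpace ℝ (Fin n) → ℝ}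

private theorem inner_gradient' (g : EuclideanSpace ℝ (Fin n) → ℝ) (x w : EuclideanSpace ℝ (Fin n)) :
    ⟪gradient g x, w⟫_ℝ = fderiv ℝ g x w := by
  rw [gradient]; simp

private theorem trace_smulRight' (φ : EuclideanSpace ℝ (Fin n) →L[ℝ] ℝ)
    (v : EuclideanSpace ℝ (Fin n)) :
    LinearMap.trace ℝ _ (φ.smulRight v).toLinearMap = φ v := by
  classical
  let b := (EuclideanSpace.basisFun (Fin n) ℝ).toBasis
  rw [LinearMap.trace_eq_matrix_trace ℝ b, Matrix.trace]
  have h1 : ∀ i, (LinearMap.toMatrix b b (φ.smulRight v).toLinearMap).diag i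
      = φ (b i) * b.repr v i := by
    intro i
    simp [Matrix.diag, LinearMap.toMatrix_apply]
  rw [Finset.sum_congr rfl (fun i _ => h1 i)]
  have h2 : φ v = φ (∑ i, b.repr v i • b i) := by rw [Module.Basis.sum_repr]
  rw [h2, map_sum]
  simp [mul_comm]

private theorem diverg_smul (f : EuclideanSpace ℝ (Fin n) → ℝ)
    (V : EuclideanSpace ℝ (Fin n) → EuclideanSpace ℝ (Fin n)) (x : EuclideanSpace ℝ (Fin n))
    (hf : DifferentiableAt ℝ f x) (hV : DifferentiableAt ℝ V x) :
    diverg (fun y => f y • V y) x = f x * diverg V x + ⟪gradient f x, V x⟫_ℝ := by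
  rw [diverg, fderiv_fun_smul hf hV]
  have : ((f x • fderiv ℝ V x + (fderiv ℝ f x).smulRight (V x)).toLinearMap)
      = f x • (fderiv ℝ V x).toLinearMap + ((fderiv ℝ f x).smulRight (V x)).toLinearMap := rfl
  rw [this, map_add, LinearMap.map_smul, trace_smulRight', inner_gradient']
  rfl

private noncomputable def Ldual (n : ℕ) :
    StrongDual ℝ (EuclideanSpace ℝ (Fin n)) ≃L[ℝ] EuclideanSpace ℝ (Fin n) :=
  (toDual ℝ (EuclideanSpace ℝ (Fin n))).symm.toContinuousLinearEquiv

private theorem grad_eq (u : EuclideanSpace ℝ (Fin n) → ℝ) :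
    gradient u = fun x => Ldual n (fderiv ℝ u x) := rfl

private theorem grad_contDiff (hu : ContDiff ℝ 2 u) : ContDiff ℝ 1 (gradient u) := by
  rw [grad_eq]
  exact (Ldual n).contDiff.comp (hu.fderiv_right (le_refl _))

private theorem fderiv_grad (x : EuclideanSpace ℝ (Fin n)) :
    fderiv ℝ (gradient u) x
      = ((Ldual n : _ →L[ℝ] _).comp (fderiv ℝ (fderiv ℝ u) x)) := by
  rw [grad_eq]
  exact (Ldual n).comp_fderiv (f := fderiv ℝ u) (x := x)

private theorem hess_apply (x v w : EuclideanSpace ℝ (Fin n)) :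
    ⟪fderiv ℝ (gradient u) x v, w⟫_ℝ = fderiv ℝ (fderiv ℝ u) x v w := by
  rw [fderiv_grad]
  show ⟪(toDual ℝ _).symm (fderiv ℝ (fderiv ℝ u) x v), w⟫_ℝ = _
  simp

private theorem hess_symm (hu : ContDiff ℝ 2 u) (x v w : EuclideanSpace ℝ (Fin n)) :
    fderiv ℝ (fderiv ℝ u) x v w = fderiv ℝ (fderiv ℝ u) x w v := by
  have hdiff : Differentiable ℝ u := hu.differentiable two_ne_zero
  have h2 : HasFDerivAt (fderiv ℝ u) (fderiv ℝ (fderiv ℝ u) x) x :=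
    (((hu.fderiv_right (le_refl _)).differentiable one_ne_zero) x).hasFDerivAt
  exact second_derivative_symmetric (fun y => (hdiff y).hasFDerivAt) h2 v w

private theorem hess_nonneg (hu : ContDiff ℝ 2 u) (x : EuclideanSpace ℝ (Fin n))
    (hx : ∀ y, u x + ⟪gradient u x, y - x⟫_ℝ ≤ u y) (v : EuclideanSpace ℝ (Fin n)) :
    0 ≤ fderiv ℝ (fderiv ℝ u) x v v := by
  by_contra hc
  push_neg at hc
  set B := fderiv ℝ (fderiv ℝ u) x with hB
  set c := B v v with hc_def
  have hvne : v ≠ 0 := by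
    intro h
    rw [h] at hc_def
    simp at hc_def
    rw [hc_def] at hc; exact absurd hc (lt_irrefl 0)
  have hvpos : (0 : ℝ) < ‖v‖ := norm_pos_iff.mpr hvne
  have hv2 : (0 : ℝ) < ‖v‖ ^ 2 := by positivity
  have hdiff : Differentiable ℝ u := hu.differentiable two_ne_zero
  set A := fderiv ℝ u x v with hA
  set ψ : ℝ → ℝ := fun t => u (x + t • v) with hψ
  have hline : ∀ t : ℝ, HasDerivAt (fun s : ℝ => x + s • v) v t := by
    intro t
    simpa using ((hasDerivAt_id t).smul_const v).const_add x
  have hψ' : ∀ t : ℝ, HasDerivAt ψ (fderiv ℝ u (x + t • v) v) t := by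
    intro t
    have := ((hdiff (x + t • v)).hasFDerivAt).comp_hasDerivAt t (hline t)
    exact this
  have hlow : ∀ t : ℝ, ψ 0 + t * A ≤ ψ t := by
    intro t
    have := hx (x + t • v)
    simp only [add_sub_cancel_left] at this
    have h2 : ⟪gradient u x, t • v⟫_ℝ = t * A := by
      rw [real_inner_smul_right, inner_gradient']
    rw [h2] at this
    simpa [hψ] using this
  have hB' : HasFDerivAt (fderiv ℝ u) B x :=
    (((hu.fderiv_right (le_refl _)).differentiable one_ne_zero) x).hasFDerivAt
  have hlo := hB'.isLittleO
  rw [Asymptotics.isLittleO_iff] at hlo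
  have hε : (0 : ℝ) < -c / (2 * ‖v‖ ^ 2) := by
    apply div_pos (by linarith) (by positivity)
  have hev := hlo hε
  have htends : Tendsto (fun t : ℝ => x + t • v) (nhds 0) (nhds x) := by
    have := ((hline 0).continuousAt : ContinuousAt (fun s : ℝ => x + s • v) 0)
    simpa using this.tendsto
  have hev2 : ∀ᶠ t : ℝ in nhds 0,
      ‖fderiv ℝ u (x + t • v) - fderiv ℝ u x - t • B v‖
        ≤ (-c / (2 * ‖v‖ ^ 2)) * (|t| * ‖v‖) := by
    filter_upwards [htends.eventually hev] with t ht
    have : B (x + t • v - x) = t • B v := by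
      rw [add_sub_cancel_left, B.map_smul]
    rw [this] at ht
    simpa [norm_smul] using ht
  rw [Metric.eventually_nhds_iff] at hev2
  obtain ⟨δ, hδpos, hδ⟩ := hev2
  set δ' := δ / 2 with hδ'
  have hδ'pos : 0 < δ' := by positivity
  have hderiv_lt : ∀ t : ℝ, 0 < t → t ≤ δ' → fderiv ℝ u (x + t • v) v < A := by
    intro t ht0 htδ
    have hdist : dist t (0:ℝ) < δ := by
      rw [Real.dist_eq, sub_zero, abs_of_pos ht0]
      calc t ≤ δ / 2 := htδ
      _ < δ := by linarith
    have hb := hδ hdist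
    have happ : |(fderiv ℝ u (x + t • v) - fderiv ℝ u x - t • B v) v|
        ≤ ‖fderiv ℝ u (x + t • v) - fderiv ℝ u x - t • B v‖ * ‖v‖ := by
      exact (fderiv ℝ u (x + t • v) - fderiv ℝ u x - t • B v).le_opNorm v |>.trans_eq' (by
        simp [Real.norm_eq_abs])
    have h3 : |(fderiv ℝ u (x + t • v)) v - A - t * c|
        ≤ (-c / (2 * ‖v‖ ^ 2)) * (|t| * ‖v‖) * ‖v‖ := by
      have : (fderiv ℝ u (x + t • v) - fderiv ℝ u x - t • B v) v
          = (fderiv ℝ u (x + t • v)) v - A - t * c := by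
        simp [hA, hc_def]
      rw [this] at happ
      exact happ.trans (mul_le_mul_of_nonneg_right hb (norm_nonneg v))
    have hrhs : (-c / (2 * ‖v‖ ^ 2)) * (|t| * ‖v‖) * ‖v‖ = t * (-c / 2) := by
      rw [abs_of_pos ht0]
      field_simp
    rw [hrhs] at h3
    have h5 := (abs_le.mp h3).2
    have htc : t * c < 0 := mul_neg_of_pos_of_neg ht0 hc
    have hhalf : t * (-c / 2) = -(t * c) / 2 := by ring
    linarith
  have hcont : ContinuousOn ψ (Set.Icc 0 δ') :=
    (hu.continuous.comp (continuous_const.add (continuous_id.smul continuous_const))).continuousOn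
  obtain ⟨ξ, hξ, hξeq⟩ := exists_hasDerivAt_eq_slope ψ (fun t => fderiv ℝ u (x + t • v) v)
    hδ'pos hcont (fun t _ => hψ' t)
  have hslope_ge : A ≤ (ψ δ' - ψ 0) / (δ' - 0) := by
    rw [sub_zero, le_div_iff₀ hδ'pos]
    linarith [hlow δ']
  have hfin := hderiv_lt ξ hξ.1 (le_of_lt hξ.2)
  rw [hξeq] at hfin
  linarith

private theorem det_le_exp_trace (A : EuclideanSpace ℝ (Fin n) →L[ℝ] EuclideanSpace ℝ (Fin n))
    (hsymm : ∀ v w, ⟪A v, w⟫_ℝ = ⟪A w, v⟫_ℝ)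
    (hpsd : ∀ v, 0 ≤ ⟪v, A v⟫_ℝ) :
    |A.det| ≤ Real.exp (LinearMap.trace ℝ _ A.toLinearMap - n) := by
  classical
  set b := EuclideanSpace.basisFun (Fin n) ℝ with hb
  set M := LinearMap.toMatrix b.toBasis b.toBasis A.toLinearMap with hM
  have hMentry : ∀ i j, M i j = ⟪b i, A (b j)⟫_ℝ := by
    intro i j
    rw [hM, LinearMap.toMatrix_apply]
    simp [OrthonormalBasis.coe_toBasis_repr_apply, OrthonormalBasis.repr_apply_apply]
  have hherm : M.IsHermitian := by
    apply Matrix.ext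
    intro i j
    rw [Matrix.conjTranspose_apply, hMentry, hMentry, star_trivial]
    calc ⟪b j, A (b i)⟫_ℝ = ⟪A (b i), b j⟫_ℝ := real_inner_comm _ _
      _ = ⟪A (b j), b i⟫_ℝ := hsymm _ _
      _ = ⟪b i, A (b j)⟫_ℝ := real_inner_comm _ _
  have hpsdM : M.PosSemidef := by
    refine Matrix.PosSemidef.of_dotProduct_mulVec_nonneg hherm (fun x => ?_)
    set y : EuclideanSpace ℝ (Fin n) := (WithLp.equiv 2 _).symm x with hy
    have hyb : ∑ j, x j • b j = y := by
      have h1 := b.sum_repr y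
      have h2 : ∀ j, b.repr y j = x j := fun j => rfl
      simpa [h2] using h1
    have hMx : ∀ i, (M *ᵥ x) i = ⟪b i, A y⟫_ℝ := by
      intro i
      rw [Matrix.mulVec, dotProduct, ← hyb, map_sum, inner_sum]
      congr 1
      ext j
      rw [hMentry, A.map_smul, real_inner_smul_right]
      ring
    have hsum : dotProduct (star x) (M *ᵥ x) = ⟪y, A y⟫_ℝ := by
      rw [dotProduct, ← hyb, sum_inner]
      congr 1
      ext i
      rw [hMx, real_inner_smul_left, star_trivial, hyb]
    rw [hsum]
    exact hpsd y
  have hdetM : A.det = M.det := (LinearMap.det_toMatrix b.toBasis A.toLinearMap).symm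
  have htrM : LinearMap.trace ℝ _ A.toLinearMap = M.trace :=
    LinearMap.trace_eq_matrix_trace ℝ b.toBasis A.toLinearMap
  have hdet_eig : M.det = ∏ i, hherm.eigenvalues i := by
    simpa using hherm.det_eq_prod_eigenvalues
  have htr_eig : M.trace = ∑ i, hherm.eigenvalues i := by
    conv_lhs => rw [hherm.spectral_theorem]
    rw [Unitary.conjStarAlgAut_apply]
    rw [Matrix.trace_mul_cycle]
    have hunit : (star (hherm.eigenvectorUnitary : Matrix (Fin n) (Fin n) ℝ))
        * (hherm.eigenvectorUnitary : Matrix (Fin n) (Fin n) ℝ) = 1 := by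
      simpa using (Matrix.mem_unitaryGroup_iff').mp hherm.eigenvectorUnitary.2
    rw [hunit, Matrix.one_mul]
    simp [Matrix.trace, Matrix.diag]
  have heig_nonneg : ∀ i, 0 ≤ hherm.eigenvalues i := fun i => hpsdM.eigenvalues_nonneg i
  have hdet_nonneg : 0 ≤ M.det := by
    rw [hdet_eig]; exact Finset.prod_nonneg (fun i _ => heig_nonneg i)
  rw [hdetM, abs_of_nonneg hdet_nonneg, hdet_eig, htrM, htr_eig]
  calc ∏ i, hherm.eigenvalues i ≤ ∏ i, Real.exp (hherm.eigenvalues i - 1) := by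
        apply Finset.prod_le_prod (fun i _ => heig_nonneg i)
        intro i _
        have := Real.add_one_le_exp (hherm.eigenvalues i - 1)
        linarith
    _ = Real.exp (∑ i, (hherm.eigenvalues i - 1)) := by rw [Real.exp_sum]
    _ = Real.exp (∑ i, hherm.eigenvalues i - n) := by
        rw [Finset.sum_sub_distrib]
        simp

private theorem gamma_surj (hu : ContDiff ℝ 2 u)
    (hu_growth : Tendsto (fun x => u x / ‖x‖) (cocompact (EuclideanSpace ℝ (Fin n))) atTop)
    (a : EuclideanSpace ℝ (Fin n)) :
    ∃ x, (∀ y, u x + ⟪gradient u x, y - x⟫_ℝ ≤ u y) ∧ gradient u x = a := by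
  set ψ : EuclideanSpace ℝ (Fin n) → ℝ := fun y => u y - ⟪a, y⟫_ℝ with hψ
  have hψcont : Continuous ψ := hu.continuous.sub (continuous_const.inner continuous_id)
  have hψcoer : Tendsto ψ (cocompact (EuclideanSpace ℝ (Fin n))) atTop := by
    rw [tendsto_atTop]
    intro C
    have h1 : ∀ᶠ y in cocompact (EuclideanSpace ℝ (Fin n)),
        ‖a‖ + max C 0 ≤ u y / ‖y‖ := hu_growth.eventually (eventually_ge_atTop _)
    have h2 : ∀ᶠ y in cocompact (EuclideanSpace ℝ (Fin n)), (1:ℝ) ≤ ‖y‖ :=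
      tendsto_norm_cocompact_atTop.eventually (eventually_ge_atTop 1)
    filter_upwards [h1, h2] with y hy1 hy2
    have hny : (0:ℝ) < ‖y‖ := lt_of_lt_of_le one_pos hy2
    have huy : (‖a‖ + max C 0) * ‖y‖ ≤ u y := by
      rw [← le_div_iff₀ hny]; exact hy1
    have hinner : ⟪a, y⟫_ℝ ≤ ‖a‖ * ‖y‖ := real_inner_le_norm a y
    have hM : max C 0 ≤ max C 0 * ‖y‖ := by
      nlinarith [le_max_right C 0]
    have : C ≤ max C 0 * ‖y‖ := le_trans (le_max_left C 0) hM
    simp only [hψ]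
    nlinarith
  obtain ⟨x₀, hx₀⟩ := hψcont.exists_forall_le hψcoer
  have hdu : Differentiable ℝ u := hu.differentiable two_ne_zero
  have hmin : IsLocalMin ψ x₀ := Filter.Eventually.of_forall hx₀
  have hfd : fderiv ℝ ψ x₀ = 0 := hmin.fderiv_eq_zero
  have hψd : fderiv ℝ ψ x₀ = fderiv ℝ u x₀ - innerSL ℝ a := by
    rw [hψ]
    have : (fun y => u y - ⟪a, y⟫_ℝ) = fun y => u y - innerSL ℝ a y := rfl
    rw [this, fderiv_fun_sub (hdu x₀) (innerSL ℝ a).differentiableAt,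
      ContinuousLinearMap.fderiv]
  have hfu : fderiv ℝ u x₀ = innerSL ℝ a := by
    rw [hψd] at hfd
    exact sub_eq_zero.mp hfd
  have hgrad : gradient u x₀ = a := by
    apply ext_inner_right ℝ
    intro w
    rw [inner_gradient', hfu]
    rfl
  refine ⟨x₀, fun y => ?_, hgrad⟩
  have := hx₀ y
  simp only [hψ] at this
  rw [hgrad, inner_sub_right]
  linarith

private theorem image_lintegral_le (hu : ContDiff ℝ 2 u) {Γ : Set (EuclideanSpace ℝ (Fin n))}
    (hΓm : MeasurableSet Γ)
    (hsurj : ∀ a, ∃ x ∈ Γ, gradient u x = a) :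
    (∫⁻ (y : EuclideanSpace ℝ (Fin n)), ENNReal.ofReal (Real.exp (-(1/4) * ‖y‖^2)))
      ≤ ∫⁻ x in Γ, ENNReal.ofReal (Real.exp (-(1/4) * ‖gradient u x‖^2))
          * ENNReal.ofReal |(fderiv ℝ (gradient u) x).det| := by
  set g : EuclideanSpace ℝ (Fin n) → ℝ := fun y => Real.exp (-(1/4) * ‖y‖^2) with hg
  have hgc : Continuous g := by
    apply Real.continuous_exp.comp
    exact (continuous_const.mul (continuous_norm.pow 2))
  have hgradc : Continuous (gradient u) := (grad_contDiff hu).continuous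
  have hgrad_diff : Differentiable ℝ (gradient u) := (grad_contDiff hu).differentiable one_ne_zero
  have hDc : Continuous fun x => |(fderiv ℝ (gradient u) x).det| :=
    (ContinuousLinearMap.continuous_det.comp ((grad_contDiff hu).continuous_fderiv one_ne_zero)).abs
  set D : EuclideanSpace ℝ (Fin n) → ℝ≥0∞ :=
    fun x => ENNReal.ofReal |(fderiv ℝ (gradient u) x).det| with hD
  have hDm : Measurable D := ENNReal.measurable_ofReal.comp hDc.measurable
  rw [lintegral_eq_lintegral_meas_lt volume
    (Filter.Eventually.of_forall fun y => (Real.exp_pos _).le) hgc.aemeasurable]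
  have hstep : ∀ t : ℝ, 0 < t →
      volume {y : EuclideanSpace ℝ (Fin n) | t < g y}
        ≤ ∫⁻ x in Γ, ({x | t < g (gradient u x)}).indicator D x := by
    intro t ht
    have hPm : MeasurableSet {x : EuclideanSpace ℝ (Fin n) | t < g (gradient u x)} :=
      (isOpen_lt continuous_const (hgc.comp hgradc)).measurableSet
    have hsub : {y : EuclideanSpace ℝ (Fin n) | t < g y}
        ⊆ gradient u '' (Γ ∩ {x | t < g (gradient u x)}) := by
      intro y hy
      obtain ⟨x, hxΓ, hxg⟩ := hsurj y
      exact ⟨x, ⟨hxΓ, by rw [mem_setOf_eq, hxg]; exact hy⟩, hxg⟩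
    calc volume {y : EuclideanSpace ℝ (Fin n) | t < g y}
        ≤ volume (gradient u '' (Γ ∩ {x | t < g (gradient u x)})) := measure_mono hsub
      _ ≤ ∫⁻ x in Γ ∩ {x | t < g (gradient u x)}, D x :=
          addHaar_image_le_lintegral_abs_det_fderiv volume (hΓm.inter hPm)
            (fun x _ => (hgrad_diff x).hasFDerivAt.hasFDerivWithinAt)
      _ = ∫⁻ x in Γ, ({x | t < g (gradient u x)}).indicator D x := by
          rw [lintegral_indicator hPm, Measure.restrict_restrict hPm, Set.inter_comm]
  calc (∫⁻ t in Ioi (0:ℝ), volume {y : EuclideanSpace ℝ (Fin n) | t < g y})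
      ≤ ∫⁻ t in Ioi (0:ℝ), ∫⁻ x in Γ, ({x | t < g (gradient u x)}).indicator D x := by
        apply lintegral_mono_ae
        rw [ae_restrict_iff' measurableSet_Ioi]
        exact Filter.Eventually.of_forall hstep
    _ = ∫⁻ x in Γ, ∫⁻ t in Ioi (0:ℝ), ({x | t < g (gradient u x)}).indicator D x := by
        apply lintegral_lintegral_swap
        have hS : MeasurableSet {p : ℝ × EuclideanSpace ℝ (Fin n) | p.1 < g (gradient u p.2)} :=
          (isOpen_lt continuous_fst ((hgc.comp hgradc).comp continuous_snd)).measurableSet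
        have : (Function.uncurry fun t x => ({x | t < g (gradient u x)}).indicator D x)
            = ({p : ℝ × EuclideanSpace ℝ (Fin n) | p.1 < g (gradient u p.2)}).indicator
                (fun p => D p.2) := by
          ext ⟨t, x⟩
          simp only [Function.uncurry, Set.indicator]
          rfl
        rw [this]
        exact ((hDm.comp measurable_snd).indicator hS).aemeasurable
    _ = ∫⁻ x in Γ, ENNReal.ofReal (g (gradient u x)) * D x := by
        apply lintegral_congr
        intro x
        have hind : ∀ t : ℝ, ({x | t < g (gradient u x)}).indicator D x
            = (Iio (g (gradient u x))).indicator (fun _ => D x) t := by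
          intro t
          by_cases h : t < g (gradient u x) <;> simp [Set.indicator, h]
        rw [lintegral_congr hind, lintegral_indicator measurableSet_Iio, setLIntegral_const,
          Measure.restrict_apply measurableSet_Iio]
        have : Iio (g (gradient u x)) ∩ Ioi (0:ℝ) = Ioo 0 (g (gradient u x)) := by
          ext s; simp [mem_Ioo, and_comm]
        rw [this, Real.volume_Ioo, sub_zero, mul_comm]

end Aux

section Main
open InnerProductSpace Set
open scoped ENNReal

/-- **Lower bound on the constant `α` (inequality (2.25)).** If `f` is a smooth positive
probability density on `ℝⁿ` and `u` is a `C²` solution of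
`div(f ∇u) = f log f − |∇f|²/f + α f` with superlinear growth `u(x)/|x| → ∞`, then
`α ≥ n + (n/2) log(4π)`. -/
theorem alpha_lower_bound (n : ℕ) (hn : 1 ≤ n)
    (f : EuclideanSpace ℝ (Fin n) → ℝ)
    (hf_smooth : ContDiff ℝ (⊤ : ℕ∞) f)
    (hf_pos : ∀ x, 0 < f x)
    (hf_norm : ∫ x, f x = 1)
    (u : EuclideanSpace ℝ (Fin n) → ℝ)
    (hu : ContDiff ℝ 2 u)
    (α : ℝ)
    (heq : ∀ x, diverg (fun y => f y • gradient u y) x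
        = f x * Real.log (f x) - ‖gradient f x‖ ^ 2 / f x + α * f x)
    (hu_growth : Tendsto (fun x => u x / ‖x‖) (cocompact (EuclideanSpace ℝ (Fin n))) atTop) :
    α ≥ n + (n / 2 : ℝ) * Real.log (4 * π) := by
  classical
  set Γ : Set (EuclideanSpace ℝ (Fin n)) :=
    {x | ∀ y, u x + ⟪gradient u x, y - x⟫_ℝ ≤ u y} with hΓ
  have hgradc : Continuous (gradient u) := (grad_contDiff hu).continuous
  have hΓclosed : IsClosed Γ := by
    have : Γ = ⋂ y, {x | u x + ⟪gradient u x, y - x⟫_ℝ ≤ u y} := by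
      ext x; simp [hΓ, Set.mem_iInter]
    rw [this]
    apply isClosed_iInter
    intro y
    exact isClosed_le (hu.continuous.add
      (hgradc.inner (continuous_const.sub continuous_id))) continuous_const
  have hΓm : MeasurableSet Γ := hΓclosed.measurableSet
  have hsurj : ∀ a, ∃ x ∈ Γ, gradient u x = a := by
    intro a
    obtain ⟨x, hx1, hx2⟩ := gamma_surj hu hu_growth a
    exact ⟨x, hx1, hx2⟩
  -- pointwise bound on Γ
  have hkey : ∀ x ∈ Γ,
      ENNReal.ofReal (Real.exp (-(1/4) * ‖gradient u x‖^2))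
        * ENNReal.ofReal |(fderiv ℝ (gradient u) x).det|
      ≤ ENNReal.ofReal (Real.exp (α - n)) * ENNReal.ofReal (f x) := by
    intro x hx
    set H := fderiv ℝ (gradient u) x with hH
    have hsymmH : ∀ v w, ⟪H v, w⟫_ℝ = ⟪H w, v⟫_ℝ := by
      intro v w
      rw [hH, hess_apply, hess_apply, hess_symm hu]
    have hpsdH : ∀ v, 0 ≤ ⟪v, H v⟫_ℝ := by
      intro v
      rw [real_inner_comm, hH, hess_apply]
      exact hess_nonneg hu x hx v
    have hdet : |H.det| ≤ Real.exp (LinearMap.trace ℝ _ H.toLinearMap - n) :=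
      det_le_exp_trace H hsymmH hpsdH
    -- the PDE gives the trace
    have hfd : DifferentiableAt ℝ f x := (hf_smooth.differentiable (by simp)) x
    have hVd : DifferentiableAt ℝ (gradient u) x :=
      ((grad_contDiff hu).differentiable one_ne_zero) x
    have hdiv := diverg_smul f (gradient u) x hfd hVd
    rw [heq x] at hdiv
    -- set notation
    set T : ℝ := LinearMap.trace ℝ _ H.toLinearMap with hT
    have hTdiv : diverg (gradient u) x = T := rfl
    rw [hTdiv] at hdiv
    set a := gradient u x with ha
    set b := gradient f x with hb
    have hfx : (0:ℝ) < f x := hf_pos x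
    -- key real inequality : T ≤ log (f x) + α + ‖a‖²/4
    have hsq : (0:ℝ) ≤ ‖b‖^2 + f x * ⟪b, a⟫_ℝ + (f x)^2 * ‖a‖^2 / 4 := by
      have h0 : (0:ℝ) ≤ ‖b + (f x / 2) • a‖^2 := sq_nonneg _
      have hexp : ‖b + (f x / 2) • a‖^2
          = ‖b‖^2 + 2 * ((f x / 2) * ⟪b, a⟫_ℝ) + (f x / 2)^2 * ‖a‖^2 := by
        rw [norm_add_sq_real, real_inner_smul_right, norm_smul, Real.norm_eq_abs,
          abs_of_pos (half_pos hfx)]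
        ring
      rw [hexp] at h0
      nlinarith
    have hTle : T ≤ Real.log (f x) + α + ‖a‖^2 / 4 := by
      have hmul : f x * T = f x * Real.log (f x) - ‖b‖^2 / f x + α * f x - ⟪b, a⟫_ℝ := by
        linarith [hdiv]
      have h2 : f x * (f x * T)
          = f x * (f x * Real.log (f x)) - ‖b‖^2 + α * (f x * f x) - f x * ⟪b, a⟫_ℝ := by
        rw [hmul]
        field_simp
      nlinarith [sq_nonneg (f x), mul_pos hfx hfx]
    -- assemble the real inequality
    have hreal : Real.exp (-(1/4) * ‖a‖^2) * |H.det| ≤ Real.exp (α - n) * f x := by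
      calc Real.exp (-(1/4) * ‖a‖^2) * |H.det|
          ≤ Real.exp (-(1/4) * ‖a‖^2) * Real.exp (T - n) := by
            apply mul_le_mul_of_nonneg_left hdet (Real.exp_pos _).le
        _ = Real.exp (T - n - ‖a‖^2/4) := by rw [← Real.exp_add]; ring_nf
        _ ≤ Real.exp (α - n + Real.log (f x)) := by
            apply Real.exp_le_exp.mpr
            linarith
        _ = Real.exp (α - n) * f x := by rw [Real.exp_add, Real.exp_log hfx]
    calc ENNReal.ofReal (Real.exp (-(1/4) * ‖a‖^2)) * ENNReal.ofReal |H.det|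
        = ENNReal.ofReal (Real.exp (-(1/4) * ‖a‖^2) * |H.det|) := by
          rw [ENNReal.ofReal_mul (Real.exp_pos _).le]
      _ ≤ ENNReal.ofReal (Real.exp (α - n) * f x) := ENNReal.ofReal_le_ofReal hreal
      _ = ENNReal.ofReal (Real.exp (α - n)) * ENNReal.ofReal (f x) := by
          rw [ENNReal.ofReal_mul (Real.exp_pos _).le]
  -- Gaussian integral
  have hgauss_int : Integrable (fun y : EuclideanSpace ℝ (Fin n) =>
      Real.exp (-(1/4) * ‖y‖^2)) := by
    have h := (GaussianFourier.integrable_cexp_neg_mul_sq_norm_add (V := EuclideanSpace ℝ (Fin n))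
      (b := ((1/4 : ℝ) : ℂ)) (by norm_num) 0 0).norm
    have heqfun : (fun v : EuclideanSpace ℝ (Fin n) =>
        ‖Complex.exp (-((1/4 : ℝ) : ℂ) * ‖v‖^2 + 0 * (inner ℝ 0 v : ℝ))‖)
        = fun v : EuclideanSpace ℝ (Fin n) => Real.exp (-(1/4) * ‖v‖^2) := by
      ext v
      rw [Complex.norm_exp]
      norm_num [← Complex.ofReal_pow]
    rwa [heqfun] at h
  have hgauss : (∫⁻ (y : EuclideanSpace ℝ (Fin n)), ENNReal.ofReal (Real.exp (-(1/4) * ‖y‖^2)))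
      = ENNReal.ofReal ((4 * π) ^ ((n:ℝ)/2)) := by
    rw [← ofReal_integral_eq_lintegral_ofReal hgauss_int
      (Filter.Eventually.of_forall fun y => (Real.exp_pos _).le)]
    congr 1
    have h := GaussianFourier.integral_rexp_neg_mul_sq_norm (V := EuclideanSpace ℝ (Fin n))
      (b := (1/4 : ℝ)) (by norm_num)
    rw [h, finrank_euclideanSpace_fin]
    congr 1
    ring
  -- f integral
  have hf_int : Integrable f := by
    by_contra h
    rw [integral_undef h] at hf_norm
    exact one_ne_zero hf_norm.symm
  have hf_lint : (∫⁻ x, ENNReal.ofReal (f x)) = 1 := by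
    rw [← ofReal_integral_eq_lintegral_ofReal hf_int
      (Filter.Eventually.of_forall fun x => (hf_pos x).le), hf_norm]
    simp
  -- main chain
  have hmain : ENNReal.ofReal ((4 * π) ^ ((n:ℝ)/2)) ≤ ENNReal.ofReal (Real.exp (α - n)) := by
    calc ENNReal.ofReal ((4 * π) ^ ((n:ℝ)/2))
        = ∫⁻ (y : EuclideanSpace ℝ (Fin n)), ENNReal.ofReal (Real.exp (-(1/4) * ‖y‖^2)) :=
          hgauss.symm
      _ ≤ ∫⁻ x in Γ, ENNReal.ofReal (Real.exp (-(1/4) * ‖gradient u x‖^2))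
            * ENNReal.ofReal |(fderiv ℝ (gradient u) x).det| :=
          image_lintegral_le hu hΓm hsurj
      _ ≤ ∫⁻ x in Γ, ENNReal.ofReal (Real.exp (α - n)) * ENNReal.ofReal (f x) := by
          apply lintegral_mono_ae
          rw [ae_restrict_iff' hΓm]
          exact Filter.Eventually.of_forall hkey
      _ = ENNReal.ofReal (Real.exp (α - n)) * ∫⁻ x in Γ, ENNReal.ofReal (f x) := by
          rw [lintegral_const_mul]
          exact ENNReal.measurable_ofReal.comp (hf_smooth.continuous.measurable)
      _ ≤ ENNReal.ofReal (Real.exp (α - n)) * ∫⁻ x, ENNReal.ofReal (f x) := by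
          apply mul_le_mul_right
          exact setLIntegral_le_lintegral Γ _
      _ = ENNReal.ofReal (Real.exp (α - n)) := by rw [hf_lint, mul_one]
  have hreal2 : (4 * π) ^ ((n:ℝ)/2) ≤ Real.exp (α - n) :=
    (ENNReal.ofReal_le_ofReal_iff (Real.exp_pos _).le).mp hmain
  have h4π : (0:ℝ) < 4 * π := by positivity
  have hlog := Real.log_le_log (Real.rpow_pos_of_pos h4π _) hreal2
  rw [Real.log_rpow h4π, Real.log_exp] at hlog
  have : (n:ℝ)/2 * Real.log (4 * π) ≤ α - n := hlog
  linarith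

end Main
end
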